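/- Let A be a nonempty finite set, T ≥ 1 a natural number, and S⁽¹⁾, …, S⁽ᵀ⁾ ⊆ A arbitrary subsets. For t ∈ {1, …, T} and a ∈ A, define N⁽ᵗ⁾(a) = #{ s ∈ {1, …, t} : a ∈ S⁽ˢ⁾ } (so N⁽ᵗ⁾(a) ≥ 1 whenever a ∈ S⁽ᵗ⁾). Then Σ_{t=1}^{T} 2 · Σ_{a ∈ S⁽ᵗ⁾} √( 2 log T / N⁽ᵗ⁾(a) ) ≤ 2 |A| √(8 T log T). -/

import Mathlib

/-!
Since `√(2 log T / N) = √(2 log T) / √N`, exchanging the two sums turns the left side into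
`2 √(2 log T)` times a sum over the arms `a ∈ A`. The times at which arm `a` is played have
counters `N = 1, 2, …, m` with `m ≤ T`, so arm `a` contributes `∑_{k ≤ m} 1/√k ≤ 2√m ≤ 2√T`.
-/

open Finset

lemma inv_sqrt_add_one_add_two_sqrt_le {x : ℝ} (hx : 0 ≤ x) :
    (√(x + 1))⁻¹ + 2 * √x ≤ 2 * √(x + 1) := by
  have hy : 0 < √(x + 1) := Real.sqrt_pos.mpr (by linarith)
  have hy_inv : √(x + 1) * (√(x + 1))⁻¹ = 1 := mul_inv_cancel₀ hy.ne'
  have hx_sq : √x ^ 2 = x := Real.sq_sqrt hx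
  have hy_sq : √(x + 1) ^ 2 = x + 1 := Real.sq_sqrt (by linarith)
  -- multiplied by `√(x+1)` this is `2 √x √(x+1) ≤ x + (x + 1)`, i.e. AM-GM
  nlinarith [sq_nonneg (√x - √(x + 1)), inv_nonneg.mpr hy.le, Real.sqrt_nonneg x]

/-- `∑_{k=1}^{m} 1/√k ≤ 2√m`, indexed by the times `t ≤ n` at which `p` holds, the `k`-th such
time having counter `k`. -/
lemma sum_inv_sqrt_card_filter_Icc_le (p : ℕ → Prop) [DecidablePred p] (n : ℕ) :
    ∑ t ∈ (Icc 1 n).filter p, (√(#((Icc 1 t).filter p) : ℝ))⁻¹ ≤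
      2 * √(#((Icc 1 n).filter p) : ℝ) := by
  induction n with
  | zero => simp
  | succ n ih =>
    have h_notMem : n + 1 ∉ (Icc 1 n).filter p := by simp
    rw [← insert_Icc_right_eq_Icc_add_one (by omega), filter_insert]
    split_ifs with hp
    · rw [sum_insert h_notMem, card_insert_of_notMem h_notMem,
        ← insert_Icc_right_eq_Icc_add_one (by omega), filter_insert, if_pos hp,
        card_insert_of_notMem h_notMem]
      push_cast
      linarith [inv_sqrt_add_one_add_two_sqrt_le (Nat.cast_nonneg (α := ℝ) #((Icc 1 n).filter p))]
    · exact ih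

theorem confidence_width_sum_le_general
    {α : Type*} [DecidableEq α] (A : Finset α) (T : ℕ)
    (S : ℕ → Finset α) (hS : ∀ t ∈ Finset.Icc 1 T, S t ⊆ A)
    (N : ℕ → α → ℕ)
    (hN : ∀ t, ∀ a, N t a = ((Finset.Icc 1 t).filter (fun s => a ∈ S s)).card) :
    ∑ t ∈ Finset.Icc 1 T, 2 * ∑ a ∈ S t, Real.sqrt (2 * Real.log T / N t a) ≤
      2 * (A.card : ℝ) * Real.sqrt (8 * T * Real.log T) := by
  have hlog : 0 ≤ Real.log T := Real.log_natCast_nonneg T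
  have h_summand (t : ℕ) (a : α) :
      √(2 * Real.log T / N t a) = √(2 * Real.log T) * (√(N t a : ℝ))⁻¹ := by
    rw [Real.sqrt_div (by positivity), div_eq_mul_inv]
  have h_swap : ∑ t ∈ Icc 1 T, ∑ a ∈ S t, (√(N t a : ℝ))⁻¹ =
      ∑ a ∈ A, ∑ t ∈ (Icc 1 T).filter (fun s => a ∈ S s), (√(N t a : ℝ))⁻¹ :=
    sum_comm' fun t a => by
      simp only [mem_filter]
      exact ⟨fun h => ⟨h, hS t h.1 h.2⟩, fun h => h.1⟩
  have h_arm (a : α) :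
      ∑ t ∈ (Icc 1 T).filter (fun s => a ∈ S s), (√(N t a : ℝ))⁻¹ ≤ 2 * √(T : ℝ) := by
    simp only [hN]
    refine (sum_inv_sqrt_card_filter_Icc_le (fun s => a ∈ S s) T).trans ?_
    gcongr
    simpa using card_filter_le (Icc 1 T) (fun s => a ∈ S s)
  have h_rhs : √(8 * T * Real.log T) = 2 * √(T : ℝ) * √(2 * Real.log T) := by
    rw [show (8 : ℝ) * T * Real.log T = 2 ^ 2 * T * (2 * Real.log T) by ring,
      Real.sqrt_mul (by positivity), Real.sqrt_mul (by positivity),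
      Real.sqrt_sq (by norm_num)]
  calc ∑ t ∈ Icc 1 T, 2 * ∑ a ∈ S t, √(2 * Real.log T / N t a)
      = 2 * √(2 * Real.log T) * ∑ t ∈ Icc 1 T, ∑ a ∈ S t, (√(N t a : ℝ))⁻¹ := by
        simp only [h_summand, ← mul_sum, mul_assoc]
    _ ≤ 2 * √(2 * Real.log T) * ∑ _a ∈ A, 2 * √(T : ℝ) := by
        rw [h_swap]
        gcongr with a
        exact h_arm a
    _ = 2 * (A.card : ℝ) * √(8 * T * Real.log T) := by
        rw [sum_const, nsmul_eq_mul, h_rhs]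
        ring

/-- pathwise confidence-width bound (Lemma 3). With
`N t a = #{s ∈ [1,t] : a ∈ S s}` (so `N t a ≥ 1` when `a ∈ S t`),
`∑_{t=1}^{T} 2 ∑_{a ∈ S t} √(2 log T / N t a) ≤ 2 |A| √(8 T log T)`. -/
theorem confidence_width_sum_le
    {α : Type*} [DecidableEq α] (A : Finset α) (hA : A.Nonempty) (T : ℕ) (hT : 1 ≤ T)
    (S : ℕ → Finset α) (hS : ∀ t ∈ Finset.Icc 1 T, S t ⊆ A)
    (N : ℕ → α → ℕ)
    (hN : ∀ t, ∀ a, N t a = ((Finset.Icc 1 t).filter (fun s => a ∈ S s)).card) :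
    ∑ t ∈ Finset.Icc 1 T, 2 * ∑ a ∈ S t, Real.sqrt (2 * Real.log T / N t a) ≤
      2 * (A.card : ℝ) * Real.sqrt (8 * T * Real.log T) :=
  confidence_width_sum_le_general A T S hS N hN
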